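/- Let R be a commutative ring with unity having no non-trivial idempotent and such that the clean graph Cl(R) is not a complete graph. Then the independence number of the strong resolving graph of Cl(R) equals 2. -/

import Mathlib

variable {V : Type*}

/-- In a graph `G`, `u` is maximally distant from `v` if `d(v,w) ≤ d(u,v)` for every
neighbour `w` of `u`. -/
def IsMaxDistFrom (G : SimpleGraph V) (u v : V) : Prop :=
  ∀ w ∈ G.neighborSet u, G.dist v w ≤ G.dist u v

/-- `u` and `v` are mutually maximally distant in `G`. -/
def IsMMD (G : SimpleGraph V) (u v : V) : Prop :=
  IsMaxDistFrom G u v ∧ IsMaxDistFrom G v u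

/-- The boundary of a graph: the set of vertices that are mutually maximally distant
from some other vertex.  This is the vertex set of the strong resolving graph. -/
def graphBoundary (G : SimpleGraph V) : Set V :=
  {u | ∃ v, u ≠ v ∧ IsMMD G u v}

/-- The strong resolving graph, realised on the full vertex set (vertices outside the
boundary are isolated): two distinct vertices are adjacent iff they are mutually
maximally distant. -/
def srGraph (G : SimpleGraph V) : SimpleGraph V where
  Adj u v := u ≠ v ∧ IsMMD G u v
  symm := ⟨fun u v h => ⟨h.1.symm, h.2.2, h.2.1⟩⟩
  loopless := ⟨fun u h => h.1 rfl⟩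

/-- The independence number of a graph: the largest cardinality of a finite set of
pairwise non-adjacent vertices. -/
noncomputable def indNum (G : SimpleGraph V) : ℕ :=
  sSup {n | ∃ s : Finset V, ((s : Set V).Pairwise fun a b => ¬ G.Adj a b) ∧ s.card = n}

/-- `S` is a strong resolving set of `G`: every pair of distinct vertices `u, v` is
strongly resolved by some `w ∈ S`, i.e. `v` lies on a shortest `u`-`w` path or `u` lies
on a shortest `v`-`w` path. -/
def IsStrongResolvingSet (G : SimpleGraph V) (S : Set V) : Prop :=
  ∀ u v : V, u ≠ v → ∃ w ∈ S,
    G.dist u w = G.dist u v + G.dist v w ∨ G.dist v w = G.dist v u + G.dist u w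

/-- The strong metric dimension of a graph: the smallest cardinality of a (finite)
strong resolving set. -/
noncomputable def sdim (G : SimpleGraph V) : ℕ :=
  sInf {n | ∃ S : Finset V, IsStrongResolvingSet G (S : Set V) ∧ S.card = n}

/-- Vertices of the clean graph: pairs `(e, u)` with `e` an idempotent and `u` a unit. -/
abbrev CleanVtx (R : Type*) [CommRing R] : Type _ := {e : R // IsIdempotentElem e} × Rˣ

/-- The clean graph `Cl(R)` of a commutative ring `R`: distinct vertices `(e,u)`, `(f,v)`
are adjacent iff `e * f = 0` or `u * v = 1`. -/
def cleanGraph (R : Type*) [CommRing R] : SimpleGraph (CleanVtx R) where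
  Adj x y := x ≠ y ∧ ((x.1 : R) * (y.1 : R) = 0 ∨ (x.2 : R) * (y.2 : R) = 1)
  symm := ⟨by
    rintro x y ⟨hxy, h | h⟩
    · exact ⟨hxy.symm, Or.inl (by rwa [mul_comm])⟩
    · exact ⟨hxy.symm, Or.inr (by rwa [mul_comm])⟩⟩
  loopless := ⟨fun x h => h.1 rfl⟩

/-- The vertex set of `Cl₂(R)`: clean vertices `(e,u)` with `e ≠ 0`. -/
def clean2Set (R : Type*) [CommRing R] : Set (CleanVtx R) := {x | (x.1 : R) ≠ 0}

/-- `Cl₂(R)`, the subgraph of `Cl(R)` induced on the vertices `(e,u)` with `e ≠ 0`. -/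
def clean2Graph (R : Type*) [CommRing R] : SimpleGraph (clean2Set R) :=
  SimpleGraph.induce (clean2Set R) (cleanGraph R)

/-- `U''(R)`: the set of units `u` with `u² ≠ 1`. -/
def uSecond (R : Type*) [CommRing R] : Set Rˣ := {u | (u : R) * (u : R) ≠ 1}

/-- `|Id(R)*|`: the number of non-trivial idempotents of `R`. -/
noncomputable def idStarNum (R : Type*) [CommRing R] : ℕ :=
  {e : R | IsIdempotentElem e ∧ e ≠ 0 ∧ e ≠ 1}.ncard

/-- `|Id⊥(R)*|`: the maximum cardinality of a set of nonzero pairwise orthogonal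
idempotents of `R`. -/
noncomputable def orthIdemNum (R : Type*) [CommRing R] : ℕ :=
  sSup {n | ∃ s : Finset R, (∀ e ∈ s, IsIdempotentElem e ∧ e ≠ 0) ∧
    ((s : Set R).Pairwise fun e f => e * f = 0) ∧ s.card = n}

/-! A vertex `(0, u)` of `Cl(R)` is adjacent to every other vertex, so `Cl(R)` has
diameter at most `2`. When `0` and `1` are the only idempotents, two distinct vertices with the
same idempotent are always mutually maximally distant: two vertices `(0, u)`, `(0, v)` are both
universal; two vertices `(1, u)`, `(1, v)` are either at distance `2`, the diameter, or adjacent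
with `v = u⁻¹`, in which case they have the same closed neighbourhood. Hence an independent set of
the strong resolving graph has at most one vertex for each idempotent. Conversely, two
non-adjacent vertices `x`, `y` exist since `Cl(R)` is not complete, and the path `x — (0, 1) — y`
shows that `x` and `(0, 1)` are not mutually maximally distant. -/

section MaximallyDistant

variable {G : SimpleGraph V} {u v w : V}

lemma isMaxDistFrom_of_adj (huv : G.Adj u v) (h : ∀ w, G.Adj u w → w = v ∨ G.Adj v w) :
    IsMaxDistFrom G u v := by
  intro w hw
  rw [SimpleGraph.dist_eq_one_iff_adj.mpr huv]
  rcases h w hw with rfl | hvw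
  · simp
  · exact (SimpleGraph.dist_eq_one_iff_adj.mpr hvw).le

lemma isMMD_of_adj (huv : G.Adj u v) (hu : ∀ w, G.Adj u w → w = v ∨ G.Adj v w)
    (hv : ∀ w, G.Adj v w → w = u ∨ G.Adj u w) : IsMMD G u v :=
  ⟨isMaxDistFrom_of_adj huv hu, isMaxDistFrom_of_adj huv.symm hv⟩

lemma not_isMaxDistFrom_of_adj_of_adj (huv : G.Adj u v) (huw : G.Adj u w) (hvw : v ≠ w)
    (hnadj : ¬ G.Adj v w) : ¬ IsMaxDistFrom G u v := by
  intro h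
  have hfar : 1 < G.dist v w :=
    (huv.symm.reachable.trans huw.reachable).one_lt_dist_of_ne_of_not_adj hvw hnadj
  have := h w huw
  rw [SimpleGraph.dist_eq_one_iff_adj.mpr huv] at this
  omega

end MaximallyDistant

section UniversalVertex

variable {G : SimpleGraph V} {c : V}

lemma dist_le_one_of_universal (hc : ∀ w, w ≠ c → G.Adj c w) (a : V) : G.dist c a ≤ 1 := by
  by_cases ha : a = c
  · simp [ha]
  · exact (SimpleGraph.dist_eq_one_iff_adj.mpr (hc a ha)).le

lemma reachable_of_universal (hc : ∀ w, w ≠ c → G.Adj c w) (a : V) : G.Reachable c a := by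
  by_cases ha : a = c
  · exact ha ▸ .refl a
  · exact (hc a ha).reachable

lemma dist_le_two_of_universal (hc : ∀ w, w ≠ c → G.Adj c w) (a b : V) : G.dist a b ≤ 2 :=
  calc G.dist a b ≤ G.dist a c + G.dist c b :=
        (reachable_of_universal hc a).symm.dist_triangle_left b
    _ = G.dist c a + G.dist c b := by rw [SimpleGraph.dist_comm]
    _ ≤ 2 := by
        have := dist_le_one_of_universal hc a
        have := dist_le_one_of_universal hc b
        omega

lemma isMMD_of_not_adj_of_universal (hc : ∀ w, w ≠ c → G.Adj c w) {u v : V} (huv : u ≠ v)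
    (hnadj : ¬ G.Adj u v) : IsMMD G u v := by
  have hreach : G.Reachable u v :=
    (reachable_of_universal hc u).symm.trans (reachable_of_universal hc v)
  have hdist : 2 ≤ G.dist u v := hreach.one_lt_dist_of_ne_of_not_adj huv hnadj
  refine ⟨fun w _ => ?_, fun w _ => ?_⟩
  · exact (dist_le_two_of_universal hc v w).trans hdist
  · rw [SimpleGraph.dist_comm (u := v)]
    exact (dist_le_two_of_universal hc u w).trans hdist

lemma exists_not_srGraph_adj_of_universal (hc : ∀ w, w ≠ c → G.Adj c w) (hG : G ≠ ⊤) :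
    ∃ x, c ≠ x ∧ ¬ (srGraph G).Adj c x := by
  obtain ⟨x, y, hxy, hnadj⟩ : ∃ x y, x ≠ y ∧ ¬ G.Adj x y := by
    by_contra! h
    exact hG (eq_top_iff.mpr fun x y hxy => h x y hxy)
  have hxc : x ≠ c := by
    rintro rfl
    exact hnadj (hc y hxy.symm)
  have hyc : y ≠ c := by
    rintro rfl
    exact hnadj (hc x hxy).symm
  exact ⟨x, hxc.symm, fun h =>
    not_isMaxDistFrom_of_adj_of_adj (hc x hxc) (hc y hyc) hxy hnadj h.2.1⟩

end UniversalVertex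

lemma indNum_eq_of_isIndepSet {G : SimpleGraph V} {s : Finset V} {n : ℕ}
    (hs : G.IsIndepSet s) (hcard : s.card = n)
    (hle : ∀ t : Finset V, G.IsIndepSet t → t.card ≤ n) : indNum G = n :=
  IsGreatest.csSup_eq ⟨⟨s, hs, hcard⟩, by rintro _ ⟨t, ht, rfl⟩; exact hle t ht⟩

section CleanGraph

variable {R : Type*} [CommRing R]

lemma cleanGraph_adj_of_fst_eq_zero {x y : CleanVtx R} (hx : (x.1 : R) = 0) (hxy : x ≠ y) :
    (cleanGraph R).Adj x y :=
  ⟨hxy, .inl (by rw [hx, zero_mul])⟩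

lemma cleanGraph_eq_or_adj_of_mul_eq_one [Nontrivial R]
    (hid : ∀ e : R, IsIdempotentElem e → e = 0 ∨ e = 1) {x y w : CleanVtx R}
    (hx : (x.1 : R) = 1) (hy : (y.1 : R) = 1) (hxy : (x.2 : R) * y.2 = 1)
    (hxw : (cleanGraph R).Adj x w) : w = y ∨ (cleanGraph R).Adj y w := by
  rcases hid w.1 w.1.2 with hw | hw
  · refine .inr ((cleanGraph_adj_of_fst_eq_zero hw fun hwy => ?_).symm)
    simp [hwy, hy] at hw
  · have hxw : (x.2 : R) * w.2 = 1 := hxw.2.resolve_left (by simp [hx, hw])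
    have hu : w.2 = y.2 := mul_left_cancel (a := x.2) (Units.ext (hxw.trans hxy.symm))
    exact .inl (Prod.ext (Subtype.ext (hw.trans hy.symm)) hu)

lemma cleanGraph_isMMD_of_fst_eq (hid : ∀ e : R, IsIdempotentElem e → e = 0 ∨ e = 1)
    {x y : CleanVtx R} (hxy : x ≠ y) (h : x.1 = y.1) : IsMMD (cleanGraph R) x y := by
  rcases eq_or_ne (x.1 : R) 0 with hx | hx
  · have hy : (y.1 : R) = 0 := h ▸ hx
    refine isMMD_of_adj (cleanGraph_adj_of_fst_eq_zero hx hxy) (fun w _ => ?_) (fun w _ => ?_)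
    · exact (eq_or_ne w y).imp_right fun hwy => cleanGraph_adj_of_fst_eq_zero hy hwy.symm
    · exact (eq_or_ne w x).imp_right fun hwx => cleanGraph_adj_of_fst_eq_zero hx hwx.symm
  have : Nontrivial R := ⟨⟨_, _, hx⟩⟩
  have hx1 : (x.1 : R) = 1 := (hid _ x.1.2).resolve_left hx
  have hy1 : (y.1 : R) = 1 := h ▸ hx1
  by_cases hadj : (cleanGraph R).Adj x y
  · have hu : (x.2 : R) * y.2 = 1 := hadj.2.resolve_left (by simp [hx1, hy1])
    exact isMMD_of_adj hadj (fun w => cleanGraph_eq_or_adj_of_mul_eq_one hid hx1 hy1 hu)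
      (fun w => cleanGraph_eq_or_adj_of_mul_eq_one hid hy1 hx1 (by rw [mul_comm, hu]))
  · exact isMMD_of_not_adj_of_universal (c := (0, 1))
      (fun w hw => cleanGraph_adj_of_fst_eq_zero rfl (Ne.symm hw)) hxy hadj

lemma card_le_two_of_isIndepSet_srGraph (hid : ∀ e : R, IsIdempotentElem e → e = 0 ∨ e = 1)
    (s : Finset (CleanVtx R)) (hs : (srGraph (cleanGraph R)).IsIndepSet s) : s.card ≤ 2 := by
  classical
  calc s.card ≤ ({0, 1} : Finset R).card := by
        refine Finset.card_le_card_of_injOn (fun x => (x.1 : R)) (fun x _ => ?_) ?_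
        · simpa using hid _ x.1.2
        · intro x hx y hy hxy
          by_contra hne
          exact hs hx hy hne ⟨hne, cleanGraph_isMMD_of_fst_eq hid hne (Subtype.ext hxy)⟩
    _ ≤ 2 := Finset.card_le_two

end CleanGraph

theorem statement_11_general (R : Type*) [CommRing R]
    (hid : ∀ e : R, IsIdempotentElem e → e = 0 ∨ e = 1)
    (hnc : cleanGraph R ≠ ⊤) :
    indNum (srGraph (cleanGraph R)) = 2 := by
  classical
  have hc : ∀ w : CleanVtx R, w ≠ (0, 1) → (cleanGraph R).Adj (0, 1) w :=
    fun w hw => cleanGraph_adj_of_fst_eq_zero rfl (Ne.symm hw)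
  obtain ⟨x, hcx, hnadj⟩ := exists_not_srGraph_adj_of_universal hc hnc
  refine indNum_eq_of_isIndepSet (s := {(0, 1), x}) ?_ (Finset.card_pair hcx)
    (card_le_two_of_isIndepSet_srGraph hid)
  rw [Finset.coe_pair]
  exact Set.pairwise_pair.mpr fun _ => ⟨hnadj, fun h => hnadj h.symm⟩

theorem statement_11 (R : Type*) [CommRing R] [Nontrivial R]
    (hid : ∀ e : R, IsIdempotentElem e → e = 0 ∨ e = 1)
    (hnc : cleanGraph R ≠ ⊤) :
    indNum (srGraph (cleanGraph R)) = 2 :=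
  statement_11_general R hid hnc
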